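/- arXiv:2311.15462 — 3 statements merged into one kernel-verified Lean document; each statement's English description precedes it below -/
import Mathlib

section
/- Let A be a C*-algebra and H_A the standard Hilbert A-module of sequences {aₙ} in A with Σ a_k*a_k norm-convergent. Suppose ξ = {bₙ} ∈ H_A^♯ (i.e., sup_n ‖Σ_{k=1}^n b_k*b_k‖ < ∞ with each bₙ ∈ A) and there is a bounded net {x_α} in H_A such that ξ(x) = lim_α ⟨x_α, x⟩ in norm for all x ∈ H_A, and ξ(x_α) converges in norm. Then ξ ∈ H_A (i.e., Σ_k b_k*b_k converges in norm) and the limit of ξ(x_α) equals ⟨ξ, ξ⟩ = Σ_k b_k*b_k. -/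
/-!
The partial sums `Sₙ = ∑_{k<n} bₖ* bₖ` are squeezed around `(c + c*)/2` by a Banach–Saks
averaging argument, where `c = lim ξ(x_α)`. Pick indices `i₀, i₁, …` along the net with
`ξ(x_{iᵣ}) ≈ c` and `⟨x_{iₛ}, x_{iᵣ}⟩ ≈ ξ(x_{iᵣ})` for `r < s`; the block `Y = ∑_{r<m} x_{iᵣ}`
then has `2⟨Y, Y⟩ ≈ m²(c + c*)`, the diagonal contributing only `O(m)`. Positivity of
`⟨m b - Y, m b - Y⟩` on the first `n` coordinates gives `m (⟨b, Y⟩ₙ + ⟨Y, b⟩ₙ) ≤ m² Sₙ + ⟨Y, Y⟩`.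
For a fixed block and large `n`, `⟨b, Y⟩ₙ ≈ m c`, which bounds `Sₙ` from below; for fixed `n`, a
block with `⟨x_{iᵣ}, b⟩ₙ ≈ Sₙ` bounds it from above. Hence `2 Sₙ → c + c*`, so `ξ ∈ H_A`, and
then `ξ(x_α) = ⟨x_α, ξ⟩* → ⟨ξ, ξ⟩`.
-/

open Filter Topology Finset

lemma Filter.exists_seq_forall_mem_forall_lt_mem {ι : Type*} {l : Filter ι} [l.NeBot]
    {U : Set ι} (hU : U ∈ l) {K : ι → Set ι} (hK : ∀ j, K j ∈ l) :
    ∃ v : ℕ → ι, (∀ r, v r ∈ U) ∧ ∀ r s, r < s → v s ∈ K (v r) := by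
  classical
  have : ∀ t : Finset ι, ∃ i ∈ U, ∀ j ∈ t, i ∈ K j := fun t =>
    (nonempty_of_mem (inter_mem hU ((biInter_finset_mem t).2 fun j _ => hK j))).imp
      fun i hi => ⟨hi.1, by simpa using hi.2⟩
  choose f hfU hfK using this
  let w : ℕ → Finset ι := fun n => Nat.rec ∅ (fun _ t => insert (f t) t) n
  have hw : ∀ r s, r < s → f (w r) ∈ w s := by
    intro r s hrs
    induction hrs with
    | refl => exact mem_insert_self _ _
    | step _ ih => exact mem_insert_of_mem ih
  exact ⟨fun n => f (w n), fun n => hfU _, fun r s hrs => hfK _ _ (hw r s hrs)⟩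

lemma norm_sum_sub_card_nsmul_le {E α : Type*} [SeminormedAddCommGroup E] (t : Finset α)
    (f : α → E) (a : E) {δ : ℝ} (h : ∀ r ∈ t, ‖f r - a‖ ≤ δ) :
    ‖∑ r ∈ t, f r - #t • a‖ ≤ #t * δ := by
  rw [← sum_const, ← sum_sub_distrib]
  exact (norm_sum_le _ _).trans (by simpa using sum_le_sum h)

lemma norm_sum_sum_le {E α : Type*} [SeminormedAddCommGroup E] [DecidableEq α] (t : Finset α)
    (f : α → α → E) {a δ : ℝ} (hδ : 0 ≤ δ) (hdiag : ∀ r ∈ t, ‖f r r‖ ≤ a)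
    (hoff : ∀ r ∈ t, ∀ s ∈ t, r ≠ s → ‖f r s‖ ≤ δ) :
    ‖∑ r ∈ t, ∑ s ∈ t, f r s‖ ≤ #t * a + #t * #t * δ := by
  calc ‖∑ r ∈ t, ∑ s ∈ t, f r s‖ ≤ ∑ r ∈ t, ∑ s ∈ t, ((if r = s then a else 0) + δ) := by
        refine (norm_sum_le _ _).trans (sum_le_sum fun r hr =>
          (norm_sum_le _ _).trans (sum_le_sum fun s hs => ?_))
        split_ifs with h
        · subst h; linarith [hdiag r hr]
        · simpa using hoff r hr s hs h
    _ = #t * a + #t * #t * δ := by simp [sum_add_distrib, sum_ite_eq]; ring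

lemma norm_two_nsmul_sum_sum_sub_le {E : Type*} [NormedAddCommGroup E] [StarAddMonoid E]
    [NormedStarGroup E] (g : ℕ → ℕ → E) (c : E) (m : ℕ) {C δ : ℝ} (hδ : 0 ≤ δ)
    (hg : ∀ r s, star (g r s) = g s r) (hdiag : ∀ r, ‖g r r‖ ≤ C)
    (hlow : ∀ r s, r < s → ‖g s r - c‖ ≤ δ) :
    ‖2 • ∑ r ∈ range m, ∑ s ∈ range m, g r s - (m * m) • (c + star c)‖ ≤
      m * (2 * C + ‖c + star c‖) + m * m * (2 * δ) := by
  have hsym : ∀ r s, r < s → ‖g r s + g s r - (c + star c)‖ ≤ 2 * δ := fun r s hrs => by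
    rw [← hg s r, show star (g s r) + g s r - (c + star c) = star (g s r - c) + (g s r - c) by
      rw [star_sub]; abel]
    exact (norm_add_le _ _).trans (by rw [norm_star]; linarith [hlow r s hrs])
  have hrw : 2 • ∑ r ∈ range m, ∑ s ∈ range m, g r s - (m * m) • (c + star c) =
      ∑ r ∈ range m, ∑ s ∈ range m, (g r s + g s r - (c + star c)) := by
    simp only [sum_sub_distrib, sum_add_distrib, sum_const, card_range, smul_smul, smul_add]
    rw [sum_comm (f := fun r s => g s r), two_nsmul]
  rw [hrw]
  simpa using norm_sum_sum_le (range m) (fun r s => g r s + g s r - (c + star c)) (by positivity)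
    (fun r _ => (norm_sub_le _ _).trans (by linarith [norm_add_le (g r r) (g r r), hdiag r]))
    fun r _ s _ hrs => hrs.lt_or_gt.elim (hsym r s) fun h => by rw [add_comm]; exact hsym s r h

lemma norm_nsmul_add_star_le {E : Type*} [SeminormedAddCommGroup E] [StarAddMonoid E]
    [NormedStarGroup E] (m : ℕ) (z : E) : ‖m • (z + star z)‖ ≤ 2 * m * ‖z‖ :=
  calc ‖m • (z + star z)‖ ≤ m * ‖z + star z‖ := norm_nsmul_le ..
    _ ≤ m * (‖z‖ + ‖star z‖) := by gcongr; exact norm_add_le _ _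
    _ = 2 * m * ‖z‖ := by rw [norm_star]; ring

lemma CStarAlgebra.norm_le_of_neg_le_of_le {A : Type*} [NonUnitalCStarAlgebra A] [PartialOrder A]
    [StarOrderedRing A] {a p q : A} (hp : -p ≤ a) (hq : a ≤ q) : ‖a‖ ≤ ‖q‖ + 2 * ‖p‖ := by
  have h : ‖a + p‖ ≤ ‖q + p‖ :=
    norm_le_norm_of_nonneg_of_le (neg_le_iff_add_nonneg.1 hp) (add_le_add_left hq p)
  calc ‖a‖ = ‖(a + p) - p‖ := by rw [add_sub_cancel_right]
    _ ≤ ‖q‖ + 2 * ‖p‖ := by linarith [norm_sub_le (a + p) p, norm_add_le q p]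

namespace HA

section Algebra

variable {A : Type*} [CStarAlgebra A]

-- `tsumInner u v` is both the inner product on `H_A` and the pairing `u(v)` of `u ∈ H_A^♯` with
-- `v ∈ H_A`; `Mem v` says `v ∈ H_A`.
def partialInner (s : Finset ℕ) (u v : ℕ → A) : A := ∑ k ∈ s, star (u k) * v k

noncomputable def tsumInner (u v : ℕ → A) : A := ∑' k, star (u k) * v k

def Mem (v : ℕ → A) : Prop := ∃ a, Tendsto (fun n => partialInner (range n) v v) atTop (𝓝 a)

lemma star_partialInner (s : Finset ℕ) (u v : ℕ → A) :
    star (partialInner s u v) = partialInner s v u := by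
  simp [partialInner, star_sum]

lemma star_tsumInner (u v : ℕ → A) : star (tsumInner u v) = tsumInner v u := by
  simp [tsumInner, tsum_star]

lemma partialInner_sum_left {α : Type*} (s : Finset ℕ) (t : Finset α) (f : α → ℕ → A)
    (v : ℕ → A) : partialInner s (∑ r ∈ t, f r) v = ∑ r ∈ t, partialInner s (f r) v := by
  simp only [partialInner, Finset.sum_apply, star_sum, Finset.sum_mul]
  exact Finset.sum_comm

lemma partialInner_sum_right {α : Type*} (s : Finset ℕ) (t : Finset α) (u : ℕ → A)
    (f : α → ℕ → A) : partialInner s u (∑ r ∈ t, f r) = ∑ r ∈ t, partialInner s u (f r) := by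
  simp only [partialInner, Finset.sum_apply, Finset.mul_sum]
  exact Finset.sum_comm

lemma partialInner_nsmul_left (s : Finset ℕ) (m : ℕ) (u v : ℕ → A) :
    partialInner s (m • u) v = m • partialInner s u v := by
  simp only [partialInner, Finset.smul_sum, Pi.smul_apply, star_nsmul, smul_mul_assoc]

lemma partialInner_nsmul_right (s : Finset ℕ) (m : ℕ) (u v : ℕ → A) :
    partialInner s u (m • v) = m • partialInner s u v := by
  simp only [partialInner, Finset.smul_sum, Pi.smul_apply, mul_smul_comm]

lemma tsumInner_indicator (s : Finset ℕ) (u v : ℕ → A) :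
    tsumInner u ((s : Set ℕ).indicator v) = partialInner s u v := by
  rw [tsumInner, tsum_eq_sum (s := s) fun k hk => by simp [hk]]
  exact sum_congr rfl fun k hk => by simp [hk]

lemma partialInner_indicator {s t : Finset ℕ} (hst : s ⊆ t) (u v : ℕ → A) :
    partialInner t ((s : Set ℕ).indicator u) ((s : Set ℕ).indicator v) = partialInner s u v := by
  rw [partialInner, ← sum_subset hst fun k _ hk => by simp [hk]]
  exact sum_congr rfl fun k hk => by simp [hk]

lemma mem_indicator (s : Finset ℕ) (v : ℕ → A) : Mem ((s : Set ℕ).indicator v) := by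
  obtain ⟨N, hN⟩ := exists_nat_subset_range s
  refine ⟨partialInner s v v, tendsto_const_nhds.congr' ?_⟩
  filter_upwards [eventually_ge_atTop N] with n hn
  exact (partialInner_indicator (hN.trans (range_subset_range.2 hn)) v v).symm

section WeakApprox

variable {ι : Type*} {l : Filter ι} {b : ℕ → A} {x : ι → ℕ → A} {c : A}

lemma tendsto_partialInner_of_tendsto_tsumInner
    (hlim : ∀ y, Mem y → Tendsto (fun i => tsumInner (x i) y) l (𝓝 (tsumInner b y)))
    (s : Finset ℕ) : Tendsto (fun i => partialInner s (x i) b) l (𝓝 (partialInner s b b)) := by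
  simpa only [tsumInner_indicator] using hlim _ (mem_indicator s b)

lemma exists_seq_approx [l.NeBot] (hxmem : ∀ i, Mem (x i))
    (hlim : ∀ y, Mem y → Tendsto (fun i => tsumInner (x i) y) l (𝓝 (tsumInner b y)))
    (hc : Tendsto (fun i => tsumInner b (x i)) l (𝓝 c)) {p : ι → Prop} (hp : ∀ᶠ i in l, p i)
    {ε : ℝ} (hε : 0 < ε) :
    ∃ v : ℕ → ι, (∀ r, p (v r) ∧ ‖tsumInner b (x (v r)) - c‖ ≤ ε) ∧
      ∀ r s, r < s → ‖tsumInner (x (v s)) (x (v r)) - c‖ ≤ 2 * ε := by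
  have hnear {f : ι → A} {a : A} (hf : Tendsto f l (𝓝 a)) : ∀ᶠ i in l, ‖f i - a‖ ≤ ε :=
    (hf.eventually (eventually_norm_sub_lt a hε)).mono fun _ h => h.le
  obtain ⟨v, hvU, hvK⟩ := exists_seq_forall_mem_forall_lt_mem (hp.and (hnear hc))
    fun j => hnear (hlim (x j) (hxmem j))
  refine ⟨v, hvU, fun r s hrs => ?_⟩
  calc ‖tsumInner (x (v s)) (x (v r)) - c‖
      ≤ ‖tsumInner (x (v s)) (x (v r)) - tsumInner b (x (v r))‖ + ‖tsumInner b (x (v r)) - c‖ :=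
        norm_sub_le_norm_sub_add_norm_sub _ _ _
    _ ≤ ε + ε := add_le_add (hvK r s hrs) (hvU r).2
    _ = 2 * ε := by ring

lemma tendsto_tsumInner_self
    (hlim : ∀ y, Mem y → Tendsto (fun i => tsumInner (x i) y) l (𝓝 (tsumInner b y)))
    (hb : Mem b) : Tendsto (fun i => tsumInner b (x i)) l (𝓝 (tsumInner b b)) := by
  simpa only [star_tsumInner] using (hlim b hb).star

end WeakApprox

end Algebra

variable {A : Type*} [CStarAlgebra A] [PartialOrder A] [StarOrderedRing A]

lemma partialInner_self_nonneg (s : Finset ℕ) (u : ℕ → A) : 0 ≤ partialInner s u u :=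
  sum_nonneg fun _ _ => star_mul_self_nonneg _

lemma partialInner_mono {s t : Finset ℕ} (hst : s ⊆ t) (u : ℕ → A) :
    partialInner s u u ≤ partialInner t u u :=
  sum_le_sum_of_subset_of_nonneg hst fun _ _ _ => star_mul_self_nonneg _

lemma partialInner_add_partialInner_le (s : Finset ℕ) (u v : ℕ → A) :
    partialInner s u v + partialInner s v u ≤ partialInner s u u + partialInner s v v := by
  rw [← sub_nonneg]
  convert partialInner_self_nonneg s (u - v) using 1
  simp only [partialInner, ← sum_add_distrib, ← sum_sub_distrib]
  refine sum_congr rfl fun k _ => ?_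
  simp only [Pi.sub_apply, star_sub]
  noncomm_ring

open scoped InnerProductSpace in
lemma norm_partialInner_sq_le (s : Finset ℕ) (u v : ℕ → A) :
    ‖partialInner s u v‖ ^ 2 ≤ ‖partialInner s u u‖ * ‖partialInner s v v‖ := by
  -- Mathlib's inner product on `A` is `⟪a, b⟫ = b * star a`, hence the conjugation.
  let toMod : (ℕ → A) → WithCStarModule A (s → A) := fun w =>
    (WithCStarModule.equiv A (s → A)).symm fun k => star (w k)
  have key : ∀ w w' : ℕ → A, ⟪toMod w, toMod w'⟫_A = partialInner s w' w := by
    intro w w'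
    simp only [WithCStarModule.pi_inner, WithCStarModule.inner_def, toMod,
      WithCStarModule.equiv_symm_pi_apply, star_star, partialInner]
    exact sum_coe_sort s fun k => star (w' k) * w k
  have hnorm : ∀ w, ‖toMod w‖ ^ 2 = ‖partialInner s w w‖ := fun w => by
    rw [CStarModule.norm_sq_eq A, key]
  calc ‖partialInner s u v‖ ^ 2 = ‖⟪toMod v, toMod u⟫_A‖ ^ 2 := by rw [key]
    _ ≤ (‖toMod v‖ * ‖toMod u‖) ^ 2 := by gcongr; exact CStarModule.norm_inner_le _
    _ = ‖partialInner s u u‖ * ‖partialInner s v v‖ := by rw [mul_pow, hnorm, hnorm, mul_comm]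

lemma norm_partialInner_self_mono {s t : Finset ℕ} (hst : s ⊆ t) (u : ℕ → A) :
    ‖partialInner s u u‖ ≤ ‖partialInner t u u‖ :=
  CStarAlgebra.norm_le_norm_of_nonneg_of_le (partialInner_self_nonneg s u) (partialInner_mono hst u)

lemma summable_star_mul {u v : ℕ → A} {C : ℝ} (hu : ∀ n, ‖partialInner (range n) u u‖ ≤ C)
    (hv : Mem v) : Summable fun k => star (u k) * v k := by
  have hC : 0 ≤ C := by simpa [partialInner] using hu 0
  obtain ⟨a, ha⟩ := hv
  refine summable_iff_vanishing_norm.2 fun ε hε => ?_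
  obtain ⟨N, hN⟩ := Metric.cauchySeq_iff'.1 ha.cauchySeq (ε ^ 2 / (C + 1)) (by positivity)
  refine ⟨range N, fun t ht => ?_⟩
  obtain ⟨M, hM⟩ := exists_nat_subset_range (t ∪ range N)
  have htM : t ⊆ range M \ range N :=
    subset_sdiff.2 ⟨subset_union_left.trans hM, ht⟩
  have hNM : range N ⊆ range M := subset_union_right.trans hM
  have hvt : ‖partialInner t v v‖ < ε ^ 2 / (C + 1) := by
    refine (norm_partialInner_self_mono htM v).trans_lt ?_
    rw [partialInner, sum_sdiff_eq_sub hNM, ← dist_eq_norm]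
    exact hN M (range_subset_range.1 hNM)
  have hut : ‖partialInner t u u‖ ≤ C :=
    (norm_partialInner_self_mono (htM.trans sdiff_subset) u).trans (hu M)
  refine abs_lt_of_sq_lt_sq' ?_ hε.le |>.2
  calc ‖∑ k ∈ t, star (u k) * v k‖ ^ 2 ≤ ‖partialInner t u u‖ * ‖partialInner t v v‖ :=
        norm_partialInner_sq_le t u v
    _ ≤ C * (ε ^ 2 / (C + 1)) := by gcongr
    _ < ε ^ 2 := by
        rw [mul_div_assoc', div_lt_iff₀ (by positivity)]
        nlinarith [sq_pos_of_pos hε]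

lemma tendsto_partialInner {u v : ℕ → A} {C : ℝ} (hu : ∀ n, ‖partialInner (range n) u u‖ ≤ C)
    (hv : Mem v) : Tendsto (fun n => partialInner (range n) u v) atTop (𝓝 (tsumInner u v)) :=
  (summable_star_mul hu hv).hasSum.tendsto_sum_nat

lemma norm_tsumInner_self_le {u : ℕ → A} {C : ℝ} (hu : ∀ n, ‖partialInner (range n) u u‖ ≤ C)
    (hmem : Mem u) : ‖tsumInner u u‖ ≤ C :=
  le_of_tendsto' (tendsto_partialInner hu hmem).norm hu

lemma partialInner_self_le_of_tendsto {u : ℕ → A} {a : A}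
    (h : Tendsto (fun n => partialInner (range n) u u) atTop (𝓝 a)) (n : ℕ) :
    partialInner (range n) u u ≤ a :=
  Monotone.ge_of_tendsto (fun _ _ hmn => partialInner_mono (range_mono hmn) u) h n

lemma tendsto_partialInner_sum {α : Type*} {t : Finset α} {y : α → ℕ → A} {C : ℝ}
    (hy : ∀ r ∈ t, ∀ n, ‖partialInner (range n) (y r) (y r)‖ ≤ C) (hmem : ∀ r ∈ t, Mem (y r)) :
    Tendsto (fun n => partialInner (range n) (∑ r ∈ t, y r) (∑ r ∈ t, y r)) atTop
      (𝓝 (∑ r ∈ t, ∑ s ∈ t, tsumInner (y r) (y s))) := by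
  simp only [partialInner_sum_left]
  simp only [partialInner_sum_right]
  exact tendsto_finsetSum _ fun r hr => tendsto_finsetSum _ fun s hs =>
    tendsto_partialInner (hy r hr) (hmem s hs)

lemma nsmul_partialInner_add_le (s : Finset ℕ) (m : ℕ) (u w : ℕ → A) :
    m • (partialInner s u w + partialInner s w u) ≤
      (m * m) • partialInner s u u + partialInner s w w := by
  simpa only [partialInner_nsmul_left, partialInner_nsmul_right, smul_add, smul_smul] using
    partialInner_add_partialInner_le s (m • u) w

lemma sq_mul_norm_two_nsmul_sub_le {S c E₁ E₂ G₁ G₂ : A} {m : ℕ} (hS : star S = S)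
    (h₁ : m • (E₁ + star E₁) ≤ (m * m) • S + G₁) (h₂ : m • (E₂ + star E₂) ≤ (m * m) • S + G₂) :
    (m * m : ℝ) * ‖2 • S - (c + star c)‖ ≤
      2 * ‖2 • G₁ - (m * m) • (c + star c)‖ + ‖2 • G₂ - (m * m) • (c + star c)‖ +
        8 * m * ‖m • c - E₁‖ + 4 * m * ‖m • S - E₂‖ := by
  set T := c + star c
  have hP : -((2 • G₁ - (m * m) • T) + (2 * m) • ((m • c - E₁) + star (m • c - E₁))) ≤
      (m * m) • (2 • S - T) := by
    rw [← sub_nonneg]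
    convert nsmul_nonneg (sub_nonneg.2 h₁) 2 using 1
    simp only [T, star_sub, star_nsmul]
    module
  have hQ : (m * m) • (2 • S - T) ≤
      (2 • G₂ - (m * m) • T) + (2 * m) • ((m • S - E₂) + star (m • S - E₂)) := by
    rw [← sub_nonneg]
    convert nsmul_nonneg (sub_nonneg.2 h₂) 2 using 1
    simp only [star_sub, star_nsmul, hS]
    module
  calc (m * m : ℝ) * ‖2 • S - T‖ = ‖(m * m) • (2 • S - T)‖ := by
        rw [RCLike.norm_nsmul ℂ, nsmul_eq_mul]; push_cast; ring
    _ ≤ _ := CStarAlgebra.norm_le_of_neg_le_of_le hP hQ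
    _ ≤ _ := by
        have h₁ := norm_nsmul_add_star_le (2 * m) (m • c - E₁)
        have h₂ := norm_nsmul_add_star_le (2 * m) (m • S - E₂)
        push_cast at h₁ h₂
        linarith [norm_add_le (2 • G₁ - (m * m) • T) ((2 * m) • ((m • c - E₁) + star (m • c - E₁))),
          norm_add_le (2 • G₂ - (m * m) • T) ((2 * m) • ((m • S - E₂) + star (m • S - E₂)))]

section WeakApprox

variable {ι : Type*} {l : Filter ι} {b : ℕ → A} {x : ι → ℕ → A} {c : A} {B C : ℝ}

lemma exists_partialInner_sum_self_le (hC : ∀ i n, ‖partialInner (range n) (x i) (x i)‖ ≤ C)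
    (hxmem : ∀ i, Mem (x i)) (v : ℕ → ι) (m : ℕ) {δ : ℝ} (hδ : 0 ≤ δ)
    (hlow : ∀ r s, r < s → ‖tsumInner (x (v s)) (x (v r)) - c‖ ≤ δ) :
    ∃ G : A, (∀ n, partialInner (range n) (∑ r ∈ range m, x (v r)) (∑ r ∈ range m, x (v r)) ≤ G) ∧
      ‖2 • G - (m * m) • (c + star c)‖ ≤ m * (2 * C + ‖c + star c‖) + m * m * (2 * δ) :=
  ⟨_, partialInner_self_le_of_tendsto
      (tendsto_partialInner_sum (fun r _ => hC (v r)) fun r _ => hxmem (v r)),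
    norm_two_nsmul_sum_sum_sub_le _ c m hδ (fun _ _ => star_tsumInner _ _)
      (fun r => norm_tsumInner_self_le (hC (v r)) (hxmem (v r))) hlow⟩

variable [l.NeBot] (hB : ∀ n, ‖partialInner (range n) b b‖ ≤ B)
  (hC : ∀ i n, ‖partialInner (range n) (x i) (x i)‖ ≤ C) (hxmem : ∀ i, Mem (x i))
  (hlim : ∀ y, Mem y → Tendsto (fun i => tsumInner (x i) y) l (𝓝 (tsumInner b y)))
  (hc : Tendsto (fun i => tsumInner b (x i)) l (𝓝 c))
include hB hC hxmem hlim hc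

lemma eventually_sq_mul_norm_two_nsmul_sub_le {m : ℕ} (hm : 0 < m) {ε : ℝ} (hε : 0 < ε) :
    ∀ᶠ n in atTop, (m * m : ℝ) * ‖2 • partialInner (range n) b b - (c + star c)‖ ≤
      3 * (m * (2 * C + ‖c + star c‖)) + 32 * (m * m * ε) := by
  obtain ⟨v₁, hv₁, hlow₁⟩ :=
    exists_seq_approx hxmem hlim hc (p := fun _ => True) (.of_forall fun _ => trivial) hε
  obtain ⟨G₁, hG₁le, hG₁⟩ := exists_partialInner_sum_self_le hC hxmem v₁ m (by positivity) hlow₁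
  have hE₁ : Tendsto (fun n => partialInner (range n) b (∑ r ∈ range m, x (v₁ r))) atTop
      (𝓝 (∑ r ∈ range m, tsumInner b (x (v₁ r)))) := by
    simp only [partialInner_sum_right]
    exact tendsto_finsetSum _ fun r _ => tendsto_partialInner hB (hxmem _)
  have hF₁ : ‖∑ r ∈ range m, tsumInner b (x (v₁ r)) - m • c‖ < 2 * m * ε := by
    have := norm_sum_sub_card_nsmul_le (range m) _ c fun r _ => (hv₁ r).2
    rw [card_range] at this
    nlinarith [mul_pos (Nat.cast_pos.2 hm : (0 : ℝ) < m) hε]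
  filter_upwards [(hE₁.sub_const (m • c)).norm.eventually (gt_mem_nhds hF₁)] with n hn₁
  obtain ⟨v₂, hv₂, hlow₂⟩ := exists_seq_approx hxmem hlim hc
    ((tendsto_partialInner_of_tendsto_tsumInner hlim (range n)).eventually
      (eventually_norm_sub_lt _ hε)) hε
  obtain ⟨G₂, hG₂le, hG₂⟩ := exists_partialInner_sum_self_le hC hxmem v₂ m (by positivity) hlow₂
  have hE₂ : ‖m • partialInner (range n) b b - partialInner (range n) (∑ r ∈ range m, x (v₂ r)) b‖
      ≤ m * ε := by
    rw [norm_sub_rev, partialInner_sum_left]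
    simpa using norm_sum_sub_card_nsmul_le (range m) _ _ fun r _ => (hv₂ r).1.le
  have h₁ := (nsmul_partialInner_add_le (range n) m b _).trans (add_le_add_right (hG₁le n) _)
  have h₂ := (nsmul_partialInner_add_le (range n) m b _).trans (add_le_add_right (hG₂le n) _)
  rw [← star_partialInner (range n) b (∑ r ∈ range m, x (v₁ r))] at h₁
  rw [← star_partialInner (range n) (∑ r ∈ range m, x (v₂ r)) b, add_comm] at h₂
  have key := sq_mul_norm_two_nsmul_sub_le (c := c) (star_partialInner _ _ _) h₁ h₂
  rw [norm_sub_rev] at hn₁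
  nlinarith [mul_le_mul_of_nonneg_left hn₁.le (Nat.cast_nonneg (α := ℝ) m),
    mul_le_mul_of_nonneg_left hE₂ (Nat.cast_nonneg (α := ℝ) m)]

lemma tendsto_two_nsmul_partialInner_self :
    Tendsto (fun n => 2 • partialInner (range n) b b) atTop (𝓝 (c + star c)) := by
  refine Metric.tendsto_nhds.2 fun ε hε => ?_
  obtain ⟨m, hm⟩ := exists_nat_gt (6 * (2 * C + ‖c + star c‖) / ε)
  have hM : (0 : ℝ) < m + 1 := by positivity
  have hmK : 6 * (2 * C + ‖c + star c‖) < (m + 1) * ε := by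
    rw [div_lt_iff₀ hε] at hm; linarith
  filter_upwards [eventually_sq_mul_norm_two_nsmul_sub_le hB hC hxmem hlim hc m.succ_pos
    (by positivity : 0 < ε / 64)] with n hn
  rw [dist_eq_norm]
  push_cast at hn
  by_contra! h
  nlinarith [mul_le_mul_of_nonneg_left h (mul_pos hM hM).le, mul_lt_mul_of_pos_left hmK hM]

lemma mem_of_weak_approx : Mem b :=
  ⟨(2 : ℝ)⁻¹ • (c + star c),
    ((tendsto_two_nsmul_partialInner_self hB hC hxmem hlim hc).const_smul (2 : ℝ)⁻¹).congr
      fun n => by rw [two_nsmul, ← two_smul ℝ, smul_smul, inv_mul_cancel₀ two_ne_zero, one_smul]⟩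

end WeakApprox

end HA

/-- closedness of `H_A` in `H_A^♯`.  An element `ξ = {bₙ}` of `H_A^♯`
(a sequence in `A` with norm-bounded partial sums of `Σ bₖ*bₖ`, acting on `H_A` by
`ξ(y) = Σₖ bₖ* yₖ`) which is approximated by a bounded net `{x_α} ⊆ H_A` in the sense that
`⟨x_α, y⟩ → ξ(y)` in norm for every `y ∈ H_A`, and such that `ξ(x_α)` converges in norm,
actually lies in `H_A` (the partial sums of `Σ bₖ*bₖ` converge in norm) and
`lim_α ξ(x_α) = ⟨ξ, ξ⟩ = Σₖ bₖ*bₖ`. -/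
theorem mem_HA_of_weak_approx
    {A ι : Type*} [CStarAlgebra A] [PartialOrder A] [StarOrderedRing A]
    (l : Filter ι) [l.NeBot]
    (b : ℕ → A)
    (hb : ∃ C : ℝ, ∀ n, ‖∑ k ∈ Finset.range n, star (b k) * b k‖ ≤ C)
    (x : ι → ℕ → A)
    (hxmem : ∀ i, ∃ s : A,
      Tendsto (fun n => ∑ k ∈ Finset.range n, star (x i k) * x i k) atTop (𝓝 s))
    (hxbd : ∃ C : ℝ, ∀ i n, ‖∑ k ∈ Finset.range n, star (x i k) * x i k‖ ≤ C)
    (hlim : ∀ y : ℕ → A,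
      (∃ s : A, Tendsto (fun n => ∑ k ∈ Finset.range n, star (y k) * y k) atTop (𝓝 s)) →
      Tendsto (fun i => ∑' k, star (x i k) * y k) l (𝓝 (∑' k, star (b k) * y k)))
    (hconv : ∃ c : A, Tendsto (fun i => ∑' k, star (b k) * x i k) l (𝓝 c)) :
    (∃ s : A, Tendsto (fun n => ∑ k ∈ Finset.range n, star (b k) * b k) atTop (𝓝 s)) ∧
    Tendsto (fun i => ∑' k, star (b k) * x i k) l (𝓝 (∑' k, star (b k) * b k)) := by
  obtain ⟨B, hB⟩ := hb
  obtain ⟨C, hC⟩ := hxbd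
  obtain ⟨c, hc⟩ := hconv
  have hmem : HA.Mem b := HA.mem_of_weak_approx hB hC hxmem hlim hc
  exact ⟨hmem, HA.tendsto_tsumInner_self hlim hmem⟩
end

section
/- Let M be a W*-algebra containing a self-adjoint element with infinite spectrum, so that there exist mutually orthogonal nonzero projections p₁, p₂, … in M. Let ξ = {pₙ} ∈ H_M^♯. Then ‖ξ‖ = 1, and there is no element x ∈ H_M with ‖⟨ξ − x, ξ⟩‖ < 1/4; in particular ξ is not in the closure of H_M in the topology given by ζ ↦ ‖⟨ζ, ξ⟩‖. -/
open scoped ComplexOrder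
open Filter Topology

/-- let `M` be a W*-algebra (realized concretely on a Hilbert space `X`)
containing a sequence of mutually orthogonal nonzero (self-adjoint idempotent) projections
`pₙ`, and let `ξ = {pₙ} ∈ H_M^♯`.  Then `‖ξ‖ = 1` (every nonempty partial sum of the `pₙ`
has norm one), and there is no `x ∈ H_M` with `‖⟨ξ − x, ξ⟩‖ < 1/4`; in particular `ξ` is
not in the closure of `H_M` in the topology given by `ζ ↦ ‖⟨ζ, ξ⟩‖`.  Here
`⟨ξ − x, ξ⟩ = Σₖ (pₖ − xₖ)* pₖ`, the sum converging in the strong operator topology. -/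
theorem projections_dual_element_not_approximable
    {X : Type*} [NormedAddCommGroup X] [InnerProductSpace ℂ X] [CompleteSpace X]
    (p : ℕ → X →L[ℂ] X)
    (hsa : ∀ n, IsSelfAdjoint (p n))
    (hidem : ∀ n, p n * p n = p n)
    (hne : ∀ n, p n ≠ 0)
    (horth : ∀ m n, m ≠ n → p m * p n = 0) :
    (∀ n : ℕ, 1 ≤ n → ‖∑ k ∈ Finset.range n, p k‖ = 1) ∧
    (∀ x : ℕ → (X →L[ℂ] X),
      (∃ s : X →L[ℂ] X,
        Tendsto (fun n => ∑ k ∈ Finset.range n, star (x k) * x k) atTop (𝓝 s)) →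
      ∀ s : X →L[ℂ] X,
        (∀ v : X, HasSum (fun k => (star (p k - x k) * p k) v) (s v)) →
        (1 / 4 : ℝ) ≤ ‖s‖) := by
  constructor
  · intro n hn
    set q : X →L[ℂ] X := ∑ k ∈ Finset.range n, p k with hq
    have hqsa : star q = q := by
      rw [hq, star_sum]
      exact Finset.sum_congr rfl fun k _ => (hsa k).star_eq
    have hq2 : q * q = q := by
      rw [hq, Finset.sum_mul_sum]
      refine Finset.sum_congr rfl fun i hi => ?_
      rw [Finset.sum_eq_single i (fun j _ hj => horth i j (Ne.symm hj))
        (fun h => (h hi).elim), hidem]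
    have hqne : q ≠ 0 := by
      intro h0
      have h0mem : (0 : ℕ) ∈ Finset.range n := Finset.mem_range.2 hn
      have : q * p 0 = p 0 := by
        rw [hq, Finset.sum_mul]
        rw [Finset.sum_eq_single 0 (fun j _ hj => horth j 0 hj)
          (fun h => (h h0mem).elim), hidem]
      rw [h0, zero_mul] at this
      exact hne 0 this.symm
    have hmul : ‖q‖ * ‖q‖ = ‖q‖ * 1 := by
      rw [mul_one, ← CStarRing.norm_star_mul_self, hqsa, hq2]
    exact mul_left_cancel₀ (norm_ne_zero_iff.2 hqne) hmul
  · rintro x ⟨s0, hs0⟩ s hs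
    -- the terms star (x n) * x n tend to 0
    have hterm : Tendsto (fun n => star (x n) * x n) atTop (𝓝 0) := by
      have h1 : Tendsto (fun n => ∑ k ∈ Finset.range (n + 1), star (x k) * x k)
          atTop (𝓝 s0) := hs0.comp (tendsto_add_atTop_nat 1)
      have h2 := h1.sub hs0
      simpa [Finset.sum_range_succ] using h2
    have hnorm : Tendsto (fun n => ‖x n‖ * ‖x n‖) atTop (𝓝 0) := by
      have := hterm.norm
      simp only [norm_zero] at this
      simpa [CStarRing.norm_star_mul_self] using this
    obtain ⟨n, hn⟩ : ∃ n, ‖x n‖ * ‖x n‖ < 9 / 16 :=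
      (hnorm.eventually (gt_mem_nhds (by norm_num : (0 : ℝ) < 9 / 16))).exists
    have hxn : ‖x n‖ < 3 / 4 := by nlinarith [norm_nonneg (x n)]
    -- pick a unit vector in the range of p n
    obtain ⟨w, hw⟩ : ∃ w, p n w ≠ 0 := by
      by_contra h
      push_neg at h
      exact hne n (by ext w; simpa using h w)
    set v : X := (↑‖p n w‖ : ℂ)⁻¹ • p n w with hv
    have hnw : (‖p n w‖ : ℝ) ≠ 0 := norm_ne_zero_iff.2 hw
    have hv1 : ‖v‖ = 1 := by
      rw [hv, norm_smul, norm_inv, Complex.norm_real, Real.norm_eq_abs,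
        abs_of_nonneg (norm_nonneg _), inv_mul_cancel₀ hnw]
    have hpnv : p n v = v := by
      rw [hv, map_smul]
      congr 1
      have : p n (p n w) = (p n * p n) w := rfl
      rw [this, hidem]
    have hpkv : ∀ k, k ≠ n → p k v = 0 := by
      intro k hk
      have : p k (p n v) = (p k * p n) v := rfl
      rw [← hpnv, this, horth k n hk, ContinuousLinearMap.zero_apply]
    have hsum : HasSum (fun k => (star (p k - x k) * p k) v)
        ((star (p n - x n) * p n) v) := by
      refine hasSum_single n fun k hk => ?_
      have h1 : (star (p k - x k) * p k) v = star (p k - x k) (p k v) := rfl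
      rw [h1, hpkv k hk, map_zero]
    have hsv : s v = v - (star (x n)) v := by
      have h1 := (hs v).unique hsum
      rw [h1]
      have h2 : (star (p n - x n) * p n) v = star (p n - x n) (p n v) := rfl
      rw [h2, hpnv, star_sub, (hsa n).star_eq, ContinuousLinearMap.sub_apply, hpnv]
    have hy : ‖(star (x n)) v‖ ≤ ‖x n‖ := by
      calc ‖(star (x n)) v‖ ≤ ‖star (x n)‖ * ‖v‖ := (star (x n)).le_opNorm v
        _ = ‖x n‖ := by rw [norm_star, hv1, mul_one]
    have h2 : 1 - ‖x n‖ ≤ ‖s v‖ := by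
      rw [hsv]
      have h3 := norm_sub_norm_le v ((star (x n)) v)
      rw [hv1] at h3
      linarith
    have h4 : ‖s v‖ ≤ ‖s‖ := by
      calc ‖s v‖ ≤ ‖s‖ * ‖v‖ := s.le_opNorm v
        _ = ‖s‖ := by rw [hv1, mul_one]
    linarith
end

section
/- Let X be a Hilbert space, A ⊆ B(X) a C*-subalgebra, M the strong operator closure of A with id_X ∈ M, and H a Hilbert A-module. If {x_α} is a bounded net in H•M and x ∈ H•M such that ⟨x_α − x, x_α − x⟩(v) → 0 in X for every v ∈ X, then for every y ∈ H•M with ‖y‖ ≤ 1 and every v ∈ X, ‖⟨y, x_α − x⟩(v)‖ → 0, uniformly over such y; and for every normal functional f ∈ M_*, sup{|f(⟨y, x_α − x⟩)| : ‖y‖ ≤ 1} → 0. -/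
open scoped RightActions ComplexOrder
open Filter Topology

/-- The right-module `CStarModule` class as it stood in the older Mathlib (inner product
linear in the second argument for the right action `y <• a`); current Mathlib's
`CStarModule` is a left-module notion. -/
class CStarModuleRight (A E : Type*) [NonUnitalSemiring A] [StarRing A] [Module ℂ A]
    [AddCommGroup E] [Module ℂ E] [PartialOrder A] [SMul Aᵐᵒᵖ E] [Norm A] [Norm E]
    extends Inner A E where
  inner_add_right {x} {y} {z} : inner x (y + z) = inner x y + inner x z
  inner_self_nonneg {x} : 0 ≤ inner x x
  inner_self {x} : inner x x = 0 ↔ x = 0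
  inner_op_smul_right {a : A} {x y : E} : inner x (y <• a) = inner x y * a
  inner_smul_right_complex {z : ℂ} {x} {y} : inner x (z • y) = z • inner x y
  star_inner x y : star (inner x y) = inner y x
  norm_eq_sqrt_norm_inner_self x : ‖x‖ = √‖inner x x‖

/-!
The Hilbert-module Cauchy–Schwarz inequality `⟪z, y⟫⟪y, z⟫ ≤ ‖y‖² ⟪z, z⟫`, evaluated at `v`, gives
`‖⟪y, z⟫ v‖² ≤ ‖y‖² ‖⟪z, z⟫ v‖ ‖v‖`; with `z = x_α - x₀` and `‖y‖ ≤ 1` the right side tends to `0`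
independently of `y`. Uniformity in `y` is expressed as convergence along
`l ×ˢ 𝓟 (closedBall 0 1)`. For the normal functional, each term `⟪⟪y, z⟫ vₖ, wₖ⟫` tends to `0`
along this filter and is bounded by `C ‖vₖ‖ ‖wₖ‖`, which is summable, so Tannery's theorem
(dominated convergence for series) applies.
-/

open scoped InnerProductSpace

namespace CStarModuleRight

variable {A E : Type*} [CStarAlgebra A] [PartialOrder A] [NormedAddCommGroup E]
  [NormedSpace ℂ E] [SMul Aᵐᵒᵖ E] [CStarModuleRight A E]

lemma inner_sub_right (x y z : E) : ⟪x, y - z⟫_A = ⟪x, y⟫_A - ⟪x, z⟫_A :=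
  map_sub (AddMonoidHom.mk' (⟪x, ·⟫_A) fun _ _ => inner_add_right) y z

lemma inner_sub_left (x y z : E) : ⟪x - y, z⟫_A = ⟪x, z⟫_A - ⟪y, z⟫_A := by
  rw [← star_inner z, inner_sub_right, star_sub, star_inner, star_inner]

lemma inner_zero_left (y : E) : ⟪(0 : E), y⟫_A = 0 := by
  simpa using inner_sub_left (A := A) y y y

lemma inner_op_smul_left (a : A) (x y : E) : ⟪x <• a, y⟫_A = star a * ⟪x, y⟫_A := by
  rw [← star_inner y, inner_op_smul_right, star_mul, star_inner]

lemma inner_real_smul_right (r : ℝ) (x y : E) : ⟪x, r • y⟫_A = r • ⟪x, y⟫_A := by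
  rw [← Complex.coe_smul, inner_smul_right_complex, Complex.coe_smul]

lemma inner_real_smul_left (r : ℝ) (x y : E) : ⟪r • x, y⟫_A = r • ⟪x, y⟫_A := by
  rw [← star_inner y, inner_real_smul_right, star_smul, star_trivial, star_inner]

lemma norm_inner_self (x : E) : ‖⟪x, x⟫_A‖ = ‖x‖ ^ 2 := by
  rw [norm_eq_sqrt_norm_inner_self (A := A) x, Real.sq_sqrt (norm_nonneg _)]

variable [StarOrderedRing A]

lemma star_inner_mul_inner_le (x y : E) :
    star ⟪x, y⟫_A * ⟪x, y⟫_A ≤ ‖x‖ ^ 2 • ⟪y, y⟫_A := by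
  rcases eq_or_ne x 0 with rfl | hx
  · simp [inner_zero_left]
  set a := ⟪x, y⟫_A
  set s := ‖x‖ ^ 2
  have hs : 0 < s := by positivity
  -- `0 ≤ ⟪x a - s y, x a - s y⟫`, together with `a* ⟪x, x⟫ a ≤ s a* a`.
  have hexp : ⟪x <• a - s • y, x <• a - s • y⟫_A
      = star a * ⟪x, x⟫_A * a - s • (star a * a) - s • (star a * a) + s • (s • ⟪y, y⟫_A) := by
    rw [inner_sub_right, inner_sub_left, inner_sub_left, inner_op_smul_right,
      inner_op_smul_right, inner_op_smul_left, inner_op_smul_left, inner_real_smul_left,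
      inner_real_smul_left, inner_real_smul_right, inner_real_smul_right, ← star_inner x y,
      smul_mul_assoc, mul_smul_comm]
    abel
  have hconj : star a * ⟪x, x⟫_A * a ≤ s • (star a * a) := by
    simpa only [norm_inner_self] using
      CStarAlgebra.star_left_conjugate_le_norm_smul (a := a) (star_inner x x)
  have hsq : s • (star a * a) ≤ s • (s • ⟪y, y⟫_A) := by
    have h0 : (0 : A) ≤ ⟪x <• a - s • y, x <• a - s • y⟫_A := inner_self_nonneg
    rw [hexp] at h0
    rw [← sub_nonneg]
    convert add_nonneg h0 (sub_nonneg.mpr hconj) using 1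
    abel
  exact (smul_le_smul_iff_of_pos_left hs).mp hsq

lemma norm_inner_le (x y : E) : ‖⟪x, y⟫_A‖ ≤ ‖x‖ * ‖y‖ := by
  refine (pow_le_pow_iff_left₀ (norm_nonneg _) (by positivity) two_ne_zero).mp ?_
  calc ‖⟪x, y⟫_A‖ ^ 2 = ‖star ⟪x, y⟫_A * ⟪x, y⟫_A‖ := by
        rw [CStarRing.norm_star_mul_self, pow_two]
    _ ≤ ‖‖x‖ ^ 2 • ⟪y, y⟫_A‖ :=
        CStarAlgebra.norm_le_norm_of_nonneg_of_le (star_mul_self_nonneg _)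
          (star_inner_mul_inner_le x y)
    _ = (‖x‖ * ‖y‖) ^ 2 := by
        rw [norm_smul, norm_inner_self, Real.norm_of_nonneg (by positivity), mul_pow]

end CStarModuleRight

lemma ContinuousLinearMap.norm_apply_sq_le_of_star_mul_self_le {𝕜 E : Type*} [RCLike 𝕜]
    [NormedAddCommGroup E] [InnerProductSpace 𝕜 E] [CompleteSpace E] {T S : E →L[𝕜] E}
    (h : star T * T ≤ S) (v : E) : ‖T v‖ ^ 2 ≤ ‖S v‖ * ‖v‖ :=
  calc ‖T v‖ ^ 2 = RCLike.re ⟪(star T * T) v, v⟫_𝕜 := apply_norm_sq_eq_inner_adjoint_left T v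
    _ ≤ RCLike.re ⟪S v, v⟫_𝕜 := by
        simpa [inner_sub_left] using h.re_inner_nonneg_left v
    _ ≤ ‖S v‖ * ‖v‖ := (RCLike.re_le_norm _).trans (norm_inner_le_norm _ _)

lemma Real.summable_mul_of_summable_sq {β : Type*} {f g : β → ℝ}
    (hf : Summable fun k => f k ^ 2) (hg : Summable fun k => g k ^ 2) :
    Summable fun k => f k * g k :=
  (hf.add hg).of_norm_bounded fun k => by
    rw [Real.norm_eq_abs, abs_mul]
    nlinarith [two_mul_le_add_sq |f k| |g k|, sq_abs (f k), sq_abs (g k), abs_nonneg (f k),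
      abs_nonneg (g k)]

lemma Filter.Tendsto.eventually_forall_norm_le_of_prod_principal {ι α G : Type*}
    [SeminormedAddCommGroup G] {l : Filter ι} {s : Set α} {f : ι × α → G}
    (h : Tendsto f (l ×ˢ 𝓟 s) (𝓝 0)) {ε : ℝ} (hε : 0 < ε) :
    ∀ᶠ i in l, ∀ a ∈ s, ‖f (i, a)‖ ≤ ε :=
  eventually_prod_principal_iff.mp
    ((tendsto_zero_iff_norm_tendsto_zero.mp h).eventually (eventually_le_nhds hε))

namespace CStarModuleRight

variable {X E ι : Type*} [NormedAddCommGroup X] [InnerProductSpace ℂ X] [CompleteSpace X]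
  [NormedAddCommGroup E] [NormedSpace ℂ E] [SMul (X →L[ℂ] X)ᵐᵒᵖ E]
  [CStarModuleRight (X →L[ℂ] X) E]

lemma norm_inner_apply_sq_le (y z : E) (v : X) :
    ‖⟪y, z⟫_(X →L[ℂ] X) v‖ ^ 2 ≤ ‖y‖ ^ 2 * (‖⟪z, z⟫_(X →L[ℂ] X) v‖ * ‖v‖) := by
  have h := ContinuousLinearMap.norm_apply_sq_le_of_star_mul_self_le
    (star_inner_mul_inner_le (A := X →L[ℂ] X) y z) v
  rwa [smul_apply, norm_smul, Real.norm_of_nonneg (by positivity), mul_assoc] at h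

variable {l : Filter ι} {z : ι → E}

theorem tendsto_inner_apply_prod_closedBall
    (hz : ∀ v : X, Tendsto (fun i => ⟪z i, z i⟫_(X →L[ℂ] X) v) l (𝓝 0)) (v : X) :
    Tendsto (fun p : ι × E => ⟪p.2, z p.1⟫_(X →L[ℂ] X) v) (l ×ˢ 𝓟 (Metric.closedBall 0 1))
      (𝓝 0) := by
  refine squeeze_zero_norm' (a := fun p => √(‖⟪z p.1, z p.1⟫_(X →L[ℂ] X) v‖ * ‖v‖))
    (eventually_prod_principal_iff.mpr (.of_forall fun i y hy => ?_)) ?_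
  · rw [mem_closedBall_zero_iff] at hy
    refine Real.le_sqrt_of_sq_le ((norm_inner_apply_sq_le y (z i) v).trans ?_)
    exact mul_le_of_le_one_left (by positivity) (pow_le_one₀ (norm_nonneg y) hy)
  · simpa using (((hz v).comp tendsto_fst).norm.mul_const ‖v‖).sqrt

theorem tendsto_tsum_inner_inner_apply_prod_closedBall (hbd : ∃ C : ℝ, ∀ i, ‖z i‖ ≤ C)
    (hz : ∀ v : X, Tendsto (fun i => ⟪z i, z i⟫_(X →L[ℂ] X) v) l (𝓝 0)) {vv ww : ℕ → X}
    (hvv : Summable fun k => ‖vv k‖ ^ 2) (hww : Summable fun k => ‖ww k‖ ^ 2) :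
    Tendsto (fun p : ι × E => ∑' k, ⟪⟪p.2, z p.1⟫_(X →L[ℂ] X) (vv k), ww k⟫_ℂ)
      (l ×ˢ 𝓟 (Metric.closedBall 0 1)) (𝓝 0) := by
  obtain ⟨C, hC⟩ := hbd
  have hlim := tendsto_tsum_of_dominated_convergence
    (f := fun (p : ι × E) k => ⟪⟪p.2, z p.1⟫_(X →L[ℂ] X) (vv k), ww k⟫_ℂ)
    ((Real.summable_mul_of_summable_sq hvv hww).mul_left C)
    (fun k => (tendsto_inner_apply_prod_closedBall hz (vv k)).inner
      (tendsto_const_nhds (x := ww k)))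
    (eventually_prod_principal_iff.mpr (.of_forall fun i y hy k => ?_))
  · simpa using hlim
  rw [mem_closedBall_zero_iff] at hy
  have hT : ‖⟪y, z i⟫_(X →L[ℂ] X)‖ ≤ C :=
    (norm_inner_le y (z i)).trans ((mul_le_of_le_one_left (norm_nonneg _) hy).trans (hC i))
  calc ‖⟪⟪y, z i⟫_(X →L[ℂ] X) (vv k), ww k⟫_ℂ‖
      ≤ ‖⟪y, z i⟫_(X →L[ℂ] X)‖ * ‖vv k‖ * ‖ww k‖ :=
        (norm_inner_le_norm _ _).trans (by gcongr; exact ContinuousLinearMap.le_opNorm _ _)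
    _ ≤ C * (‖vv k‖ * ‖ww k‖) := by rw [mul_assoc]; gcongr

end CStarModuleRight

/-- let `F` be a Hilbert module over the von Neumann algebra of bounded
operators on a Hilbert space `X` (the setting of `H • M` with inner product valued in
`M ⊆ B(X)`).  If `{x_α}` is a bounded net in `F` and `x₀ ∈ F` with
`⟨x_α − x₀, x_α − x₀⟩(v) → 0` for every `v ∈ X`, then `‖⟨y, x_α − x₀⟩(v)‖ → 0` uniformly
over `‖y‖ ≤ 1`; moreover for every normal functional `f = Σₖ ⟪· vₖ, wₖ⟫` (with
`Σ‖vₖ‖², Σ‖wₖ‖² < ∞`), `sup_{‖y‖≤1} |f(⟨y, x_α − x₀⟩)| → 0`. -/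
theorem sot_convergence_uniform_inner
    {X F ι : Type*} [NormedAddCommGroup X] [InnerProductSpace ℂ X] [CompleteSpace X]
    [NormedAddCommGroup F] [NormedSpace ℂ F] [SMul (X →L[ℂ] X)ᵐᵒᵖ F]
    [CStarModuleRight (X →L[ℂ] X) F]
    (l : Filter ι)
    (x : ι → F) (x₀ : F)
    (hbd : ∃ C : ℝ, ∀ i, ‖x i‖ ≤ C)
    (hconv : ∀ v : X,
      Tendsto (fun i => (inner (𝕜 := X →L[ℂ] X) (x i - x₀) (x i - x₀)) v) l (𝓝 0)) :
    (∀ (v : X) (ε : ℝ), 0 < ε → ∀ᶠ i in l, ∀ y : F, ‖y‖ ≤ 1 →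
      ‖(inner (𝕜 := X →L[ℂ] X) y (x i - x₀)) v‖ ≤ ε) ∧
    (∀ vv ww : ℕ → X, Summable (fun k => ‖vv k‖ ^ 2) → Summable (fun k => ‖ww k‖ ^ 2) →
      ∀ ε : ℝ, 0 < ε → ∀ᶠ i in l, ∀ y : F, ‖y‖ ≤ 1 →
        ‖∑' k, (inner ℂ ((inner (𝕜 := X →L[ℂ] X) y (x i - x₀)) (vv k)) (ww k) : ℂ)‖ ≤ ε) := by
  have hbd' : ∃ C : ℝ, ∀ i, ‖x i - x₀‖ ≤ C := by
    obtain ⟨C, hC⟩ := hbd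
    exact ⟨C + ‖x₀‖, fun i => (norm_sub_le _ _).trans (by gcongr; exact hC i)⟩
  refine ⟨fun v ε hε => ?_, fun vv ww hvv hww ε hε => ?_⟩
  · simpa using (CStarModuleRight.tendsto_inner_apply_prod_closedBall hconv v
      ).eventually_forall_norm_le_of_prod_principal hε
  · simpa using (CStarModuleRight.tendsto_tsum_inner_inner_apply_prod_closedBall hbd' hconv
      hvv hww).eventually_forall_norm_le_of_prod_principal hε
end
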